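/- If R is a commutative local nil-clean ring, then for every positive integer n the matrix ring Mₙ(R) is nil-clean. -/

import Mathlib

/-- An element of a ring is nil-clean if it is the sum of an idempotent and a nilpotent. -/
def IsNilCleanRing (R : Type*) [Ring R] : Prop :=
  ∀ a : R, ∃ e n : R, IsIdempotentElem e ∧ IsNilpotent n ∧ a = e + n

/-!
The residue field of a local nil-clean ring is `𝔽₂` and its maximal ideal is nil, so the kernel of
`Mₙ(R) → Mₙ(𝔽₂)` is nil; as idempotents lift modulo nil ideals, it suffices to show that `Mₙ(𝔽₂)` is
nil-clean. Splitting off the cyclic subspace spanned by the iterates of a nonzero vector puts a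
matrix over a field into block upper triangular form whose first block is a companion matrix, and
nil-cleanness passes to block triangular matrices with nil-clean diagonal blocks. A companion
matrix over `𝔽₂` with trace `1` is its last column (an idempotent) plus a shift; when the trace is
`0`, changing the last two columns instead gives an idempotent of rank two and a nilpotent
remainder.
-/

open Matrix Module

section NilClean

variable {R S : Type*}

def IsNilClean [Ring R] (a : R) : Prop :=
  ∃ e n : R, IsIdempotentElem e ∧ IsNilpotent n ∧ a = e + n

section Ring

variable [Ring R] [Ring S]

theorem IsNilpotent.isNilClean {n : R} (hn : IsNilpotent n) : IsNilClean n :=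
  ⟨0, n, .zero, hn, (zero_add n).symm⟩

theorem IsNilClean.map {F : Type*} [FunLike F R S] [RingHomClass F R S] (f : F) {a : R}
    (ha : IsNilClean a) : IsNilClean (f a) := by
  obtain ⟨e, n, he, hn, rfl⟩ := ha
  exact ⟨f e, f n, he.map f, hn.map f, map_add f e n⟩

theorem isNilClean_map_iff (f : R ≃+* S) {a : R} : IsNilClean (f a) ↔ IsNilClean a :=
  ⟨fun h => by simpa using h.map f.symm, fun h => h.map f⟩

theorem IsNilCleanRing.of_surjective (f : R →+* S) (hf : Function.Surjective f)
    (hR : IsNilCleanRing R) : IsNilCleanRing S := by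
  intro b
  obtain ⟨a, rfl⟩ := hf b
  exact IsNilClean.map f (hR a)

theorem IsNilCleanRing.of_surjective_of_ker_isNilpotent (f : R →+* S)
    (hf : Function.Surjective f) (hker : ∀ x ∈ RingHom.ker f, IsNilpotent x)
    (hS : IsNilCleanRing S) : IsNilCleanRing R := by
  intro a
  obtain ⟨e, n, he, ⟨k, hk⟩, hfa⟩ := hS (f a)
  obtain ⟨e', he', rfl⟩ := exists_isIdempotentElem_eq_of_ker_isNilpotent f hker e (hf e) he
  refine ⟨e', a - e', he', IsNilpotent.of_pow (m := k) (hker _ ?_), (add_sub_cancel e' a).symm⟩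
  rw [RingHom.mem_ker, map_pow, map_sub, hfa, add_sub_cancel_left, hk]

theorem IsNilCleanRing.eq_zero_or_one [IsDomain R] (hR : IsNilCleanRing R) (a : R) :
    a = 0 ∨ a = 1 := by
  obtain ⟨e, n, he, hn, rfl⟩ := hR a
  rw [hn.eq_zero, add_zero]
  exact IsIdempotentElem.iff_eq_zero_or_one.1 he

end Ring

theorem IsLocalRing.eq_zero_or_one_of_isIdempotentElem [CommRing R] [IsLocalRing R] {e : R}
    (he : IsIdempotentElem e) : e = 0 ∨ e = 1 := by
  rcases IsLocalRing.isUnit_or_isUnit_one_sub_self e with h | h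
  · exact .inr ((IsIdempotentElem.iff_eq_one_of_isUnit h).1 he)
  · exact .inl (sub_eq_self.1 ((IsIdempotentElem.iff_eq_one_of_isUnit h).1 he.one_sub))

theorem IsNilCleanRing.isNilpotent_of_mem_maximalIdeal [CommRing R] [IsLocalRing R]
    (hR : IsNilCleanRing R) {x : R} (hx : x ∈ IsLocalRing.maximalIdeal R) : IsNilpotent x := by
  obtain ⟨e, n, he, hn, rfl⟩ := hR x
  rcases IsLocalRing.eq_zero_or_one_of_isIdempotentElem he with rfl | rfl
  · simpa using hn
  · exact absurd hn.isUnit_one_add ((IsLocalRing.mem_maximalIdeal _).1 hx)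

end NilClean

namespace Matrix

variable {n R : Type*} [Fintype n] [DecidableEq n]

theorem isNilpotent_of_forall_isNilpotent [CommRing R] {A : Matrix n n R}
    (hA : ∀ i j, IsNilpotent (A i j)) : IsNilpotent A := by
  set I : Ideal R := Ideal.span (Set.range fun p : n × n => A p.1 p.2)
  obtain ⟨t, ht⟩ : IsNilpotent I :=
    (Ideal.FG.isNilpotent_iff_le_nilradical (Submodule.fg_span (Set.finite_range _))).2 <|
      Ideal.span_le.2 <| by rintro _ ⟨p, rfl⟩; exact mem_nilradical.2 (hA p.1 p.2)
  have hpow : ∀ k i j, (A ^ k) i j ∈ I ^ k := by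
    intro k
    induction k with
    | zero => simp [Ideal.one_eq_top]
    | succ k ih =>
      intro i j
      rw [pow_succ A, mul_apply, pow_succ I]
      exact Ideal.sum_mem _ fun l _ => Ideal.mul_mem_mul (ih i l) (Ideal.subset_span ⟨(l, j), rfl⟩)
  refine ⟨t, ext fun i j => ?_⟩
  simpa [ht] using hpow t i j

end Matrix

theorem IsNilCleanRing.matrix_of_surjective_of_ker_isNilpotent {n R S : Type*} [Fintype n]
    [DecidableEq n] [CommRing R] [Ring S] (f : R →+* S) (hf : Function.Surjective f)
    (hker : ∀ x ∈ RingHom.ker f, IsNilpotent x) (hS : IsNilCleanRing (Matrix n n S)) :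
    IsNilCleanRing (Matrix n n R) := by
  refine hS.of_surjective_of_ker_isNilpotent f.mapMatrix (fun B => ?_) fun A hA => ?_
  · exact ⟨B.map (Function.surjInv hf), by ext; simp [Function.surjInv_eq hf]⟩
  · exact isNilpotent_of_forall_isNilpotent fun i j => hker _ (congrFun₂ hA i j)

section Blocks

variable {l m R : Type*} [Fintype l] [Fintype m] [DecidableEq l] [DecidableEq m] [Ring R]

theorem Matrix.exists_fromBlocks_zero₂₁_pow (A : Matrix l l R) (B : Matrix l m R)
    (D : Matrix m m R) (k : ℕ) : ∃ C, fromBlocks A B 0 D ^ k = fromBlocks (A ^ k) C 0 (D ^ k) := by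
  induction k with
  | zero => exact ⟨0, by simp [fromBlocks_one]⟩
  | succ k ih =>
    obtain ⟨C, hC⟩ := ih
    exact ⟨A ^ k * B + C * D, by simp [pow_succ, hC, fromBlocks_multiply]⟩

theorem Matrix.isNilpotent_fromBlocks_zero₂₁ {A : Matrix l l R} {B : Matrix l m R}
    {D : Matrix m m R} (hA : IsNilpotent A) (hD : IsNilpotent D) :
    IsNilpotent (fromBlocks A B 0 D) := by
  obtain ⟨a, ha⟩ := hA
  obtain ⟨d, hd⟩ := hD
  obtain ⟨C, hC⟩ := exists_fromBlocks_zero₂₁_pow A B D a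
  obtain ⟨C', hC'⟩ := exists_fromBlocks_zero₂₁_pow A B D d
  exact ⟨a + d, by simp [pow_add, hC, hC', ha, hd, fromBlocks_multiply]⟩

theorem IsNilClean.fromBlocks_zero₂₁ {A : Matrix l l R} {B : Matrix l m R} {D : Matrix m m R}
    (hA : IsNilClean A) (hD : IsNilClean D) : IsNilClean (fromBlocks A B 0 D) := by
  obtain ⟨e, n, he, hn, rfl⟩ := hA
  obtain ⟨e', n', he', hn', rfl⟩ := hD
  refine ⟨fromBlocks e 0 0 e', fromBlocks n B 0 n', ?_, isNilpotent_fromBlocks_zero₂₁ hn hn', ?_⟩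
  · simp [IsIdempotentElem, fromBlocks_multiply, he.eq, he'.eq]
  · simp [fromBlocks_add]

end Blocks

namespace Matrix

variable {n R : Type*} [Fintype n] [DecidableEq n]

theorem isIdempotentElem_of_block_eq_one [Semiring R] {E : Matrix n n R} (p : n → Prop)
    (hcol : ∀ i j, ¬ p j → E i j = 0) (hblock : ∀ i j, p i → p j → E i j = (1 : Matrix n n R) i j) :
    IsIdempotentElem E := by
  ext i j
  rw [mul_apply]
  by_cases hj : p j
  · rw [Finset.sum_eq_single j (fun l _ hlj => ?_) (by simp), hblock j j hj hj, one_apply_eq,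
      mul_one]
    by_cases hl : p l
    · rw [hblock l j hl hj, one_apply_ne hlj, mul_zero]
    · rw [hcol i l hl, zero_mul]
  · simp [hcol _ _ hj]

theorem pow_mulVec_eq_of_mulVec_eq_succ [Semiring R] {N : Matrix n n R} {w : ℕ → n → R} {l : ℕ}
    (hN : ∀ j < l, N *ᵥ w j = w (j + 1)) : ∀ j ≤ l, (N ^ j) *ᵥ w 0 = w j := by
  intro j hj
  induction j with
  | zero => simp
  | succ j ih => rw [pow_succ', ← mulVec_mulVec, ih (by omega), hN j (by omega)]

theorem pow_eq_zero_of_span_pow_mulVec_eq_top [CommSemiring R] {N : Matrix n n R} {v : n → R}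
    {m : ℕ} (hspan : Submodule.span R (Set.range fun j : Fin m => (N ^ (j : ℕ)) *ᵥ v) = ⊤)
    (hv : (N ^ m) *ᵥ v = 0) : N ^ m = 0 := by
  have : (N ^ m).mulVecLin = 0 := LinearMap.ext_on_range hspan fun j => by
    rw [LinearMap.zero_apply, mulVecLin_apply, mulVec_mulVec, pow_mul_comm, ← mulVec_mulVec, hv,
      mulVec_zero]
  exact ext_iff_mulVec.2 fun w => by simpa using LinearMap.congr_fun this w

end Matrix

section Companion

variable {R : Type*}

/-- The `j`-th standard basis vector, indexed by a natural number; it is `0` when `m ≤ j`. -/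
def unitVec [Zero R] [One R] {m : ℕ} (j : ℕ) : Fin m → R := fun i => if (i : ℕ) = j then 1 else 0

def Matrix.IsCompanion [Zero R] [One R] {m : ℕ} (M : Matrix (Fin m) (Fin m) R) : Prop :=
  ∀ j : Fin m, (j : ℕ) + 1 < m → M.col j = unitVec (j + 1)

section Semiring

variable [Semiring R] {m : ℕ}

theorem unitVec_val (j : Fin m) : (unitVec j : Fin m → R) = Pi.single j 1 := by
  ext i
  simp [unitVec, Pi.single_apply, Fin.ext_iff]

theorem unitVec_of_le {j : ℕ} (h : m ≤ j) : (unitVec j : Fin m → R) = 0 := by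
  ext i
  simp [unitVec, show (i : ℕ) ≠ j by omega]

theorem Matrix.mulVec_unitVec {l : Type*} (A : Matrix l (Fin m) R) {j : ℕ} (hj : j < m) :
    A *ᵥ unitVec j = A.col ⟨j, hj⟩ := by
  rw [← mulVec_single_one, ← unitVec_val ⟨j, hj⟩]

theorem span_range_unitVec :
    Submodule.span R (Set.range fun j : Fin m => (unitVec j : Fin m → R)) = ⊤ := by
  simpa only [unitVec_val, ← Pi.basisFun_apply] using (Pi.basisFun R (Fin m)).span_eq

end Semiring

section CommSemiring

variable [CommSemiring R]

theorem Matrix.pow_eq_zero_of_mulVec_unitVec_eq_succ {m : ℕ} {N : Matrix (Fin m) (Fin m) R}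
    (hN : ∀ j < m, N *ᵥ unitVec j = unitVec (j + 1)) : N ^ m = 0 := by
  have hiter := pow_mulVec_eq_of_mulVec_eq_succ hN
  refine pow_eq_zero_of_span_pow_mulVec_eq_top ?_ (by rw [hiter m le_rfl, unitVec_of_le le_rfl])
  rw [show (fun j : Fin m => (N ^ (j : ℕ)) *ᵥ unitVec 0) =
      fun j : Fin m => (unitVec j : Fin m → R) from
    funext fun j => hiter j j.isLt.le]
  exact span_range_unitVec

theorem Matrix.pow_eq_zero_of_mulVec_unitVec_of_mulVec_eq_zero {d : ℕ}
    {N : Matrix (Fin (d + 2)) (Fin (d + 2)) R} {x : Fin (d + 2) → R}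
    (hshift : ∀ j < d, N *ᵥ unitVec j = unitVec (j + 1)) (hd : N *ᵥ unitVec d = x)
    (hx : N *ᵥ x = 0)
    (hspan : unitVec (d + 1) ∈ Submodule.span R
      (insert x (Set.range fun j : Fin (d + 1) => (unitVec j : Fin (d + 2) → R)))) :
    N ^ (d + 2) = 0 := by
  have hiter := pow_mulVec_eq_of_mulVec_eq_succ hshift
  have hxiter : (N ^ (d + 1)) *ᵥ unitVec 0 = x := by
    rw [pow_succ', ← mulVec_mulVec, hiter d le_rfl, hd]
  refine pow_eq_zero_of_span_pow_mulVec_eq_top ?_ (by rw [pow_succ', ← mulVec_mulVec, hxiter, hx])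
  set S := Set.range fun j : Fin (d + 2) => (N ^ (j : ℕ)) *ᵥ unitVec 0
  have hxS : x ∈ S := ⟨Fin.last _, hxiter⟩
  have hunitS : ∀ j : Fin (d + 1), (unitVec j : Fin (d + 2) → R) ∈ S :=
    fun j => ⟨j.castSucc, hiter j (Nat.lt_succ_iff.1 j.isLt)⟩
  rw [eq_top_iff, ← span_range_unitVec, Submodule.span_le]
  rintro _ ⟨j, rfl⟩
  induction j using Fin.lastCases with
  | last => exact Submodule.span_mono (Set.insert_subset hxS (Set.range_subset_iff.2 hunitS)) hspan
  | cast j => exact Submodule.subset_span (hunitS j)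

end CommSemiring

section CommRing

variable [CommRing R]

theorem Matrix.IsCompanion.isNilClean_of_apply_last_last_eq_one {d : ℕ}
    {M : Matrix (Fin (d + 1)) (Fin (d + 1)) R} (hM : M.IsCompanion)
    (hlast : M (Fin.last d) (Fin.last d) = 1) : IsNilClean M := by
  set N := M.updateCol (Fin.last d) 0
  refine ⟨M - N, N, ?_, ⟨d + 1, pow_eq_zero_of_mulVec_unitVec_eq_succ fun j hj => ?_⟩,
    (sub_add_cancel M N).symm⟩
  · refine isIdempotentElem_of_block_eq_one (· = Fin.last d) (fun i j hj => ?_) ?_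
    · simp [N, updateCol_ne hj]
    · rintro i j rfl rfl
      simp [N, hlast]
  rw [mulVec_unitVec _ hj]
  rcases Nat.lt_succ_iff_lt_or_eq.1 hj with hjd | rfl
  · have hne : (⟨j, hj⟩ : Fin (d + 1)) ≠ Fin.last d := Fin.ne_of_val_ne hjd.ne
    ext i
    simpa [N, updateCol_ne hne] using congrFun (hM ⟨j, hj⟩ (show j + 1 < d + 1 by omega)) i
  · rw [show (⟨j, hj⟩ : Fin (j + 1)) = Fin.last j from rfl, unitVec_of_le le_rfl]
    ext i
    exact updateCol_self

section TraceZero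

variable {k : ℕ}

/-- `M` with its last two columns replaced by `x` and `y`, chosen so that for a companion matrix in
characteristic two it maps `e₀ ↦ e₁ ↦ ⋯ ↦ e_{k+1} ↦ x ↦ 0`. -/
def Matrix.companionNilpotentPart (M : Matrix (Fin (k + 3)) (Fin (k + 3)) R) :
    Matrix (Fin (k + 3)) (Fin (k + 3)) R :=
  let a := M ⟨k + 1, by omega⟩ (Fin.last (k + 2))
  let x := (1 + a) • unitVec k + unitVec (k + 1) + unitVec (k + 2)
  let y := (1 + a) • unitVec k + a • unitVec (k + 1) + unitVec (k + 2)
  (M.updateCol ⟨k + 1, by omega⟩ x).updateCol (Fin.last (k + 2)) y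

variable [CharP R 2] {M : Matrix (Fin (k + 3)) (Fin (k + 3)) R}

theorem Matrix.IsCompanion.isNilpotent_companionNilpotentPart (hM : M.IsCompanion) :
    IsNilpotent M.companionNilpotentPart := by
  set p : Fin (k + 3) := ⟨k + 1, by omega⟩
  set a := M p (Fin.last (k + 2))
  set x : Fin (k + 3) → R := (1 + a) • unitVec k + unitVec (k + 1) + unitVec (k + 2)
  set y : Fin (k + 3) → R := (1 + a) • unitVec k + a • unitVec (k + 1) + unitVec (k + 2)
  set N := M.companionNilpotentPart
  have hN : N = (M.updateCol p x).updateCol (Fin.last (k + 2)) y := rfl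
  have hpl : p ≠ Fin.last (k + 2) := Fin.ne_of_val_ne (show k + 1 ≠ k + 2 by omega)
  have hshift : ∀ j < k + 1, N *ᵥ unitVec j = unitVec (j + 1) := by
    intro j hj
    have hjp : (⟨j, by omega⟩ : Fin (k + 3)) ≠ p := Fin.ne_of_val_ne (show j ≠ k + 1 by omega)
    have hjl : (⟨j, by omega⟩ : Fin (k + 3)) ≠ Fin.last (k + 2) :=
      Fin.ne_of_val_ne (show j ≠ k + 2 by omega)
    rw [mulVec_unitVec _ (by omega), ← hM ⟨j, by omega⟩ (show j + 1 < k + 3 by omega)]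
    ext i
    simp [hN, updateCol_ne hjp, updateCol_ne hjl]
  have hNp : N *ᵥ unitVec (k + 1) = x := by
    rw [mulVec_unitVec _ (by omega)]
    ext i
    exact (updateCol_ne hpl).trans updateCol_self
  have hNl : N *ᵥ unitVec (k + 2) = y := by
    rw [mulVec_unitVec _ (by omega)]
    ext i
    exact updateCol_self
  refine ⟨k + 3, pow_eq_zero_of_mulVec_unitVec_of_mulVec_eq_zero hshift hNp ?_ ?_⟩
  · simp only [x, y, mulVec_add, mulVec_smul, hshift k (by omega), hNp, hNl]
    linear_combination (norm := module) (CharTwo.two_eq_zero (R := R)) •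
      ((1 + a) • unitVec k + (1 + a) • unitVec (k + 1) + unitVec (k + 2))
  · refine Submodule.mem_span_insert.2 ⟨1, -((1 + a) • unitVec k + unitVec (k + 1)), ?_, ?_⟩
    · exact neg_mem (add_mem (Submodule.smul_mem _ _ (Submodule.subset_span ⟨⟨k, by omega⟩, rfl⟩))
        (Submodule.subset_span ⟨⟨k + 1, by omega⟩, rfl⟩))
    · simp only [x]
      module

theorem Matrix.IsCompanion.isIdempotentElem_sub_companionNilpotentPart (hM : M.IsCompanion)
    (hlast : M (Fin.last (k + 2)) (Fin.last (k + 2)) = 0) :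
    IsIdempotentElem (M - M.companionNilpotentPart) := by
  set p : Fin (k + 3) := ⟨k + 1, by omega⟩
  have hpl : p ≠ Fin.last (k + 2) := Fin.ne_of_val_ne (show k + 1 ≠ k + 2 by omega)
  have hcol := hM p (show k + 1 + 1 < k + 3 by omega)
  have hMpp : M p p = 0 := by simpa [unitVec, p] using congrFun hcol p
  have hMlp : M (Fin.last _) p = 1 := by simpa [unitVec, p] using congrFun hcol (Fin.last _)
  refine isIdempotentElem_of_block_eq_one (fun j => j = p ∨ j = Fin.last (k + 2))
    (fun i j hj => ?_) ?_
  · rw [sub_apply, companionNilpotentPart, updateCol_ne (not_or.1 hj).2,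
      updateCol_ne (not_or.1 hj).1, sub_self]
  rintro i j (rfl | rfl) (rfl | rfl) <;>
    simp [companionNilpotentPart, hpl, hpl.symm, unitVec, p, hMpp, hMlp, hlast,
      CharTwo.sub_eq_add, CharTwo.add_self_eq_zero]

theorem Matrix.IsCompanion.isNilClean_of_apply_last_last_eq_zero (hM : M.IsCompanion)
    (hlast : M (Fin.last (k + 2)) (Fin.last (k + 2)) = 0) : IsNilClean M :=
  ⟨_, _, hM.isIdempotentElem_sub_companionNilpotentPart hlast,
    hM.isNilpotent_companionNilpotentPart, (sub_add_cancel _ _).symm⟩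

end TraceZero

theorem Matrix.IsCompanion.isNilClean_fin_two [CharP R 2] {M : Matrix (Fin 2) (Fin 2) R}
    (hM : M.IsCompanion) (h11 : M 1 1 = 0) (h01 : M 0 1 = 0 ∨ M 0 1 = 1) : IsNilClean M := by
  have hM' : M = !![0, M 0 1; 1, 0] := by
    have hcol := congrFun (hM 0 (by simp))
    rw [eta_fin_two M, h11]
    simpa [unitVec] using ⟨hcol 0, hcol 1⟩
  rcases h01 with h | h
  · refine IsNilpotent.isNilClean ⟨2, ?_⟩
    rw [hM', h]
    ext i j
    fin_cases i <;> fin_cases j <;> simp [sq, mul_apply]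
  · refine ⟨1, M - 1, .one, ⟨2, ?_⟩, (add_sub_cancel 1 M).symm⟩
    rw [hM', h]
    ext i j
    fin_cases i <;> fin_cases j <;> simp [sq, mul_apply, one_apply, CharTwo.add_self_eq_zero]

end CommRing

theorem Matrix.IsCompanion.isNilClean {K : Type*} [Field K] (hK : ∀ x : K, x = 0 ∨ x = 1) {m : ℕ}
    {M : Matrix (Fin m) (Fin m) K} (hM : M.IsCompanion) : IsNilClean M := by
  have : CharP K 2 := CharTwo.of_one_ne_zero_of_two_eq_zero one_ne_zero <|
    (hK 2).resolve_right fun h => one_ne_zero (by linear_combination h)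
  match m, M, hM with
  | 0, M, _ => exact Subsingleton.elim M 0 ▸ IsNilpotent.zero.isNilClean
  | d + 1, M, hM =>
    rcases hK (M (Fin.last d) (Fin.last d)) with h | h
    · match d, M, hM, h with
      | 0, M, _, h =>
        have : M = 0 := by
          ext i j
          fin_cases i
          fin_cases j
          exact h
        exact this ▸ IsNilpotent.zero.isNilClean
      | 1, M, hM, h => exact hM.isNilClean_fin_two h (hK _)
      | k + 2, M, hM, h => exact hM.isNilClean_of_apply_last_last_eq_zero h
    · exact hM.isNilClean_of_apply_last_last_eq_one h

end Companion

theorem Module.End.exists_linearIndependent_pow_apply {K V : Type*} [Field K] [AddCommGroup V]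
    [Module K V] [FiniteDimensional K V] (f : Module.End K V) {v : V} (hv : v ≠ 0) :
    ∃ d : ℕ, LinearIndependent K (fun j : Fin (d + 1) => (f ^ (j : ℕ)) v) ∧
      (f ^ (d + 1)) v ∈ Submodule.span K (Set.range fun j : Fin (d + 1) => (f ^ (j : ℕ)) v) := by
  classical
  have hdep : ∃ d, ¬ LinearIndependent K (fun j : Fin (d + 1) => (f ^ (j : ℕ)) v) :=
    ⟨finrank K V, fun h => by simpa using h.fintype_card_le_finrank⟩
  obtain ⟨d, hd⟩ : ∃ d, Nat.find hdep = d + 1 := Nat.exists_eq_succ_of_ne_zero fun h0 =>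
    Nat.find_spec hdep (h0 ▸ linearIndependent_unique_iff (ι := Fin 1).2 (by simpa using hv))
  have hli : LinearIndependent K (fun j : Fin (d + 1) => (f ^ (j : ℕ)) v) :=
    not_not.1 (Nat.find_min hdep (by omega))
  refine ⟨d, hli, ?_⟩
  have := Nat.find_spec hdep
  rw [hd, linearIndependent_finSucc'] at this
  exact not_not.1 (not_and.1 this hli)

theorem Module.Basis.sumExtend_inl {K V ι : Type*} [Field K] [AddCommGroup V] [Module K V]
    {v : ι → V} (hv : LinearIndependent K v) (i : ι) : Basis.sumExtend hv (Sum.inl i) = v i := by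
  simp only [Basis.sumExtend, Basis.coe_reindex, Basis.coe_extend, Function.comp_apply]
  rfl

theorem LinearMap.toBlocks₂₁_toMatrixAlgEquiv {R M ι κ : Type*} [CommSemiring R] [AddCommMonoid M]
    [Module R M] [Fintype ι] [Fintype κ] [DecidableEq ι] [DecidableEq κ] (b : Basis (ι ⊕ κ) R M)
    {f : Module.End R M}
    (hf : ∀ j, f (b (Sum.inl j)) ∈ Submodule.span R (Set.range (b ∘ Sum.inl))) :
    (toMatrixAlgEquiv b f).toBlocks₂₁ = 0 := by
  ext i j
  have := b.repr_support_subset_of_mem_span _ (Set.range_comp b Sum.inl ▸ hf j)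
  rw [toBlocks₂₁, of_apply, toMatrixAlgEquiv_apply]
  exact Finsupp.notMem_support_iff.1 fun h => by simpa using this h

namespace Module.End

variable {K V : Type*} [Field K] [AddCommGroup V] [Module K V] {f : Module.End K V} {v : V} {d : ℕ}
  (hli : LinearIndependent K fun j : Fin (d + 1) => (f ^ (j : ℕ)) v)

theorem apply_sumExtend_inl (j : Fin (d + 1)) :
    f (Basis.sumExtend hli (Sum.inl j)) = (f ^ ((j : ℕ) + 1)) v := by
  rw [Basis.sumExtend_inl, pow_succ', Module.End.mul_apply]

variable [Fintype (Basis.sumExtendIndex hli)] [DecidableEq (Basis.sumExtendIndex hli)]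

theorem isCompanion_toBlocks₁₁_toMatrixAlgEquiv_sumExtend :
    (LinearMap.toMatrixAlgEquiv (Basis.sumExtend hli) f).toBlocks₁₁.IsCompanion := by
  intro j hj
  ext i
  have hnext : (f ^ ((j : ℕ) + 1)) v = Basis.sumExtend hli (Sum.inl ⟨j + 1, hj⟩) :=
    (Basis.sumExtend_inl hli ⟨j + 1, hj⟩).symm
  simp [toBlocks₁₁, LinearMap.toMatrixAlgEquiv_apply, apply_sumExtend_inl, hnext,
    Finsupp.single_apply, unitVec, Fin.ext_iff, eq_comm]

theorem toBlocks₂₁_toMatrixAlgEquiv_sumExtend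
    (hmem : (f ^ (d + 1)) v ∈ Submodule.span K (Set.range fun j : Fin (d + 1) => (f ^ (j : ℕ)) v)) :
    (LinearMap.toMatrixAlgEquiv (Basis.sumExtend hli) f).toBlocks₂₁ = 0 := by
  refine LinearMap.toBlocks₂₁_toMatrixAlgEquiv _ fun j => ?_
  have hrange : ⇑(Basis.sumExtend hli) ∘ Sum.inl = fun j : Fin (d + 1) => (f ^ (j : ℕ)) v :=
    funext (Basis.sumExtend_inl hli)
  rw [apply_sumExtend_inl, hrange]
  rcases Nat.lt_succ_iff_lt_or_eq.1 j.isLt with hj | hj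
  · exact Submodule.subset_span ⟨⟨j + 1, by omega⟩, rfl⟩
  · rwa [hj]

end Module.End

theorem Matrix.isNilClean_of_forall_eq_zero_or_one {K : Type*} [Field K]
    (hK : ∀ x : K, x = 0 ∨ x = 1) {ι : Type*} [Fintype ι] [DecidableEq ι] (A : Matrix ι ι K) :
    IsNilClean A := by
  suffices h : ∀ n (A : Matrix (Fin n) (Fin n) K), IsNilClean A from
    (isNilClean_map_iff (reindexRingEquiv K (Fintype.equivFin ι))).1 (h _ _)
  intro n A
  induction n using Nat.strong_induction_on with
  | _ n ih =>
  rcases Nat.eq_zero_or_pos n with rfl | hn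
  · exact Subsingleton.elim A 0 ▸ IsNilpotent.zero.isNilClean
  set f := Matrix.toLinAlgEquiv' A
  obtain ⟨d, hli, hmem⟩ :=
    Module.End.exists_linearIndependent_pow_apply f (v := Pi.single ⟨0, hn⟩ 1) (by simp)
  set b := Basis.sumExtend hli
  have := Module.Finite.finite_basis b
  have := Finite.sum_right (Fin (d + 1)) (β := Basis.sumExtendIndex hli)
  let := Fintype.ofFinite (Basis.sumExtendIndex hli)
  classical
  have hcard : Fintype.card (Basis.sumExtendIndex hli) < n := by
    have := (finrank_eq_card_basis b).symm.trans (finrank_fin_fun K)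
    rw [Fintype.card_sum, Fintype.card_fin] at this
    omega
  rw [← isNilClean_map_iff Matrix.toLinAlgEquiv'.toRingEquiv,
    ← isNilClean_map_iff (LinearMap.toMatrixAlgEquiv b).toRingEquiv]
  change IsNilClean (LinearMap.toMatrixAlgEquiv b f)
  rw [← fromBlocks_toBlocks (LinearMap.toMatrixAlgEquiv b f),
    Module.End.toBlocks₂₁_toMatrixAlgEquiv_sumExtend hli hmem]
  have hcomp := Module.End.isCompanion_toBlocks₁₁_toMatrixAlgEquiv_sumExtend hli
  exact (hcomp.isNilClean hK).fromBlocks_zero₂₁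
    ((isNilClean_map_iff (reindexRingEquiv K (Fintype.equivFin _))).1 (ih _ hcard _))

theorem matrix_nilClean_of_comm_local_nilClean_general (R : Type*) [CommRing R] [IsLocalRing R]
    (h : IsNilCleanRing R) (n : ℕ) :
    IsNilCleanRing (Matrix (Fin n) (Fin n) R) := by
  have hk : ∀ x : IsLocalRing.ResidueField R, x = 0 ∨ x = 1 :=
    (h.of_surjective _ IsLocalRing.residue_surjective).eq_zero_or_one
  refine IsNilCleanRing.matrix_of_surjective_of_ker_isNilpotent (IsLocalRing.residue R)
    IsLocalRing.residue_surjective (fun x hx => ?_) (isNilClean_of_forall_eq_zero_or_one hk)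
  exact h.isNilpotent_of_mem_maximalIdeal (by rwa [← IsLocalRing.ker_residue])

theorem matrix_nilClean_of_comm_local_nilClean (R : Type*) [CommRing R] [IsLocalRing R]
    (h : IsNilCleanRing R) (n : ℕ) (hn : 0 < n) :
    IsNilCleanRing (Matrix (Fin n) (Fin n) R) :=
  matrix_nilClean_of_comm_local_nilClean_general R h n
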